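/- For integers d ≥ 3 and 1 ≤ s ≤ ⌊(d-1)/2⌋, the quantity C(s,d) = s(d-s-1)(d - 2(⌊(d-1)/2⌋ - s + 1)) - 2·Σ_{i=1}^{s-1} i(d-i-1) is nonnegative; in fact C(s,d) > s(d-s-1) - 1 (i.e., C(s,d) ≥ s(d-s-1)). -/

import Mathlib

/-!
Put `m = s(d-s-1)`. Since `i ↦ i(d-i-1)` increases on `[0, (d-1)/2]`, each of the `s-1`
summands is at most `m`, while `2⌊(d-1)/2⌋ + 1 ≤ d`
makes the factor `d - 2(D - s + 1)` at least `2s - 1`.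
Hence `C(s,d) ≥ (2s-1)m - 2(s-1)m = m ≥ 0`.
-/

open Finset

/-- `x ↦ x(a - x)` is monotone below `a / 2`: `j(a-j) - i(a-i) = (j-i)(a-i-j)`. -/
lemma mul_sub_self_le_mul_sub_self {R : Type*} [CommRing R] [LinearOrder R] [IsStrictOrderedRing R]
    {a i j : R} (hij : i ≤ j) (h : i + j ≤ a) : i * (a - i) ≤ j * (a - j) := by
  nlinarith [mul_nonneg (sub_nonneg.2 hij) (sub_nonneg.2 h)]

lemma sum_Icc_mul_sub_le {d s : ℕ} (h : 2 * s + 1 ≤ d) :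
    ∑ i ∈ Icc 1 (s - 1), (i : ℤ) * ((d : ℤ) - i - 1)
      ≤ ((s : ℤ) - 1) * (s * ((d : ℤ) - s - 1)) := by
  cases s with
  | zero => simp
  | succ t =>
    have hterm : ∀ i ∈ Icc 1 t,
        (i : ℤ) * ((d : ℤ) - i - 1) ≤ (t + 1 : ℕ) * ((d : ℤ) - (t + 1 : ℕ) - 1) := by
      intro i hi
      have hit : i ≤ t := (mem_Icc.1 hi).2
      have := mul_sub_self_le_mul_sub_self (a := (d : ℤ) - 1) (i := i) (j := (t + 1 : ℕ))
        (by exact_mod_cast hit.trans t.le_succ) (by push_cast; omega)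
      simpa only [sub_right_comm] using this
    simpa using sum_le_card_nsmul _ _ _ hterm

lemma two_mul_sub_one_le {d : ℕ} (s : ℕ) (hd : 1 ≤ d) :
    2 * (s : ℤ) - 1 ≤ (d : ℤ) - 2 * ((((d - 1) / 2 : ℕ) : ℤ) - s + 1) := by
  omega

theorem C_sd_nonneg_general (d s : ℕ) (hs : 1 ≤ s) (hsD : s ≤ (d - 1) / 2) :
    0 ≤ (s : ℤ) * ((d : ℤ) - s - 1) * ((d : ℤ) - 2 * ((((d - 1) / 2 : ℕ) : ℤ) - s + 1))
        - 2 * ∑ i ∈ Finset.Icc 1 (s - 1), (i : ℤ) * ((d : ℤ) - i - 1) ∧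
    (s : ℤ) * ((d : ℤ) - s - 1)
      ≤ (s : ℤ) * ((d : ℤ) - s - 1) * ((d : ℤ) - 2 * ((((d - 1) / 2 : ℕ) : ℤ) - s + 1))
        - 2 * ∑ i ∈ Finset.Icc 1 (s - 1), (i : ℤ) * ((d : ℤ) - i - 1) := by
  have h2s : 2 * s + 1 ≤ d := by omega
  have hm : 0 ≤ (s : ℤ) * ((d : ℤ) - s - 1) :=
    mul_nonneg (by positivity) (by omega : (0 : ℤ) ≤ d - s - 1)
  have hsum := sum_Icc_mul_sub_le h2s
  have hfac := mul_le_mul_of_nonneg_left (two_mul_sub_one_le s (by omega : 1 ≤ d)) hm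
  have hge : (s : ℤ) * ((d : ℤ) - s - 1)
      ≤ (s : ℤ) * ((d : ℤ) - s - 1) * ((d : ℤ) - 2 * ((((d - 1) / 2 : ℕ) : ℤ) - s + 1))
        - 2 * ∑ i ∈ Finset.Icc 1 (s - 1), (i : ℤ) * ((d : ℤ) - i - 1) := by
    linarith
  exact ⟨hm.trans hge, hge⟩

/-- For `d ≥ 3` and `1 ≤ s ≤ ⌊(d-1)/2⌋`, with `D = ⌊(d-1)/2⌋`, the quantity
`C(s,d) = s(d-s-1)(d - 2(D - s + 1)) - 2 Σ_{i=1}^{s-1} i(d-i-1)`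
is nonnegative; in fact `C(s,d) ≥ s(d-s-1)`. -/
theorem C_sd_nonneg (d s : ℕ) (hd : 3 ≤ d) (hs : 1 ≤ s) (hsD : s ≤ (d - 1) / 2) :
    0 ≤ (s : ℤ) * ((d : ℤ) - s - 1) * ((d : ℤ) - 2 * ((((d - 1) / 2 : ℕ) : ℤ) - s + 1))
        - 2 * ∑ i ∈ Finset.Icc 1 (s - 1), (i : ℤ) * ((d : ℤ) - i - 1) ∧
    (s : ℤ) * ((d : ℤ) - s - 1)
      ≤ (s : ℤ) * ((d : ℤ) - s - 1) * ((d : ℤ) - 2 * ((((d - 1) / 2 : ℕ) : ℤ) - s + 1))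
        - 2 * ∑ i ∈ Finset.Icc 1 (s - 1), (i : ℤ) * ((d : ℤ) - i - 1) :=
  C_sd_nonneg_general d s hs hsD
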